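/- arXiv:math/0503637 — 6 statements merged into one kernel-verified Lean document; each statement's English description precedes it below -/
import Mathlib

section
/- Let D be a (possibly noncommutative) division ring with center Z(D), and let α, β be ring endomorphisms of D that preserve Z(D) and satisfy α|_{Z(D)} ≠ β|_{Z(D)}. If δ : D → D is an additive map satisfying δ(ab) = δ(a)·α(b) + β(a)·δ(b) for all a, b ∈ D (an (α,β)-derivation), then δ is inner: there exists d ∈ D such that δ(a) = d·α(a) − β(a)·d for all a ∈ D. -/
/-- Every (α,β)-derivation of a division ring whose endomorphisms α, β preserve
the center and disagree on it is inner. -/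
theorem stmt_0 {D : Type*} [DivisionRing D] (α β : D →+* D)
    (hα : ∀ x ∈ Subring.center D, α x ∈ Subring.center D)
    (hβ : ∀ x ∈ Subring.center D, β x ∈ Subring.center D)
    (hne : ∃ a ∈ Subring.center D, α a ≠ β a)
    (δ : D →+ D)
    (hδ : ∀ a b : D, δ (a * b) = δ a * α b + β a * δ b) :
    ∃ d : D, ∀ a : D, δ a = d * α a - β a * d := by
  obtain ⟨a, ha, hab⟩ := hne
  have hacomm : ∀ g : D, g * a = a * g := Subring.mem_center_iff.mp ha
  set c := α a - β a with hc
  have hc0 : c ≠ 0 := sub_ne_zero.mpr hab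
  have hαa : ∀ g : D, g * α a = α a * g := Subring.mem_center_iff.mp (hα a ha)
  have hβa : ∀ g : D, g * β a = β a * g := Subring.mem_center_iff.mp (hβ a ha)
  have hccomm : ∀ g : D, Commute g c := fun g => by
    simp only [Commute, SemiconjBy, hc, mul_sub, sub_mul, hαa g, hβa g]
  refine ⟨δ a * c⁻¹, fun x => ?_⟩
  have key : δ x * c = δ a * α x - β x * δ a := by
    have h1 := hδ x a
    have h2 := hδ a x
    rw [← hacomm x] at h2
    have h3 := h1.symm.trans h2
    rw [← hβa (δ x)] at h3
    -- h3 : δ x * α a + β x * δ a = δ a * α x + δ x * β a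
    rw [hc, mul_sub, sub_eq_sub_iff_add_eq_add]
    linear_combination (norm := noncomm_ring) h3
  have h4 := congrArg (· * c⁻¹) key
  simp only [mul_assoc, mul_inv_cancel₀ hc0, mul_one] at h4
  rw [h4, sub_mul]
  congr 1
  rw [mul_assoc, mul_assoc, ((hccomm (α x)).inv_right₀).eq, ← mul_assoc]
  exact mul_assoc _ _ _
end

section
/- Let D be a division ring, α, β endomorphisms of D preserving the center, with α|_{Z(D)} ≠ β|_{Z(D)}, and let a ∈ Z(D) satisfy α(a) ≠ β(a). If δ is an (α,β)-derivation of D with δ(a) = 0, then δ = 0. -/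
/-- If α, β preserve the center and disagree on it at a central element a with
δ(a) = 0, then the (α,β)-derivation δ vanishes identically. -/
theorem stmt_1 {D : Type*} [DivisionRing D] (α β : D →+* D)
    (hα : ∀ x ∈ Subring.center D, α x ∈ Subring.center D)
    (hβ : ∀ x ∈ Subring.center D, β x ∈ Subring.center D)
    (hne : ∃ x ∈ Subring.center D, α x ≠ β x)
    (a : D) (haZ : a ∈ Subring.center D) (hab : α a ≠ β a)
    (δ : D →+ D)
    (hδ : ∀ x y : D, δ (x * y) = δ x * α y + β x * δ y)
    (hδa : δ a = 0) :
    ∀ x : D, δ x = 0 := by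
  intro b
  have hcomm : a * b = b * a := (Subring.mem_center_iff.mp haZ b).symm
  have h1 : δ (a * b) = β a * δ b := by rw [hδ, hδa]; simp
  have h2 : δ (b * a) = δ b * α a := by rw [hδ, hδa]; simp
  have hβc : β a * δ b = δ b * β a :=
    (Subring.mem_center_iff.mp (hβ a haZ) (δ b)).symm
  have key : δ b * (α a - β a) = 0 := by
    have := h1.symm.trans (by rw [hcomm, h2])
    rw [hβc] at this
    rw [mul_sub, this, sub_self]
  rcases mul_eq_zero.mp key with h | h
  · exact h
  · exact absurd (sub_eq_zero.mp h) hab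
end

section
/- Let F be a field of characteristic p > 0 and let δ : F → F be a derivation. Then for every t ∈ F and every i with 1 ≤ i ≤ p−2, the sum ∑_{l=0}^{p-2} δ^i(t^{p-1-l}) · t^l equals 0, where δ^i denotes the i-th iterate of δ. -/
/-!
Extend `δ` coefficientwise to a derivation `D` of `F[X]`. In characteristic `p`,
`(X - t) ^ p = X ^ p - t ^ p`, so `(X - t) ^ (p - 1) = ∑_{l < p} t ^ (p - 1 - l) X ^ l`.
A derivation lowers the order of vanishing along `X - t` by at most one, so
`(X - t) ^ (p - 1 - i)` divides `D^i ((X - t) ^ (p - 1))`, which therefore vanishes at `X = t`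
when `i < p - 1`. Evaluating the coefficientwise expansion at `t` gives the sum, plus the term
`δ^i(1) t^(p-1) = 0`.
-/

open Polynomial Finset

theorem CharP.geom_sum₂_eq_sub_pow_pred {R : Type*} [CommRing R] [IsDomain R] (p : ℕ)
    [Fact p.Prime] [CharP R p] (x y : R) :
    ∑ i ∈ range p, x ^ i * y ^ (p - 1 - i) = (x - y) ^ (p - 1) := by
  obtain rfl | hxy := eq_or_ne x y
  · have hp := (Fact.out : p.Prime).one_lt
    -- both sides vanish: the left one is `p • x ^ (p - 1)`
    rw [sub_self, zero_pow (by omega), sum_congr rfl fun i hi => by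
      rw [← pow_add, Nat.add_sub_cancel' (by simp at hi; omega)]]
    simp
  · refine mul_right_cancel₀ (sub_ne_zero.mpr hxy) ?_
    rw [geom_sum₂_mul, ← pow_succ, Nat.sub_add_cancel (Fact.out : p.Prime).one_lt.le,
      sub_pow_char]

theorem Derivation.pow_dvd_iterate_pow_mul {R A : Type*} [CommRing R] [CommRing A]
    [Algebra R A] (D : Derivation R A A) (u : A) (k i : ℕ) (g : A) :
    u ^ k ∣ D^[i] (u ^ (k + i) * g) := by
  induction i generalizing g with
  | zero => exact dvd_mul_right _ _
  | succ i ih =>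
    have hstep : D (u ^ (k + i + 1) * g) = u ^ (k + i) * ((k + i + 1) • D u * g + u * D g) := by
      rw [D.leibniz, D.leibniz_pow, Nat.add_sub_cancel, pow_succ]
      simp only [smul_eq_mul, nsmul_eq_mul]
      ring
    rw [Function.iterate_succ_apply, ← add_assoc, hstep]
    exact ih _

namespace Differential

variable {A : Type*} [CommRing A] [Differential A]

theorem iterate_mapCoeffs_sum_monomial (s : Finset ℕ) (a : ℕ → A) (i : ℕ) :
    mapCoeffs^[i] (∑ l ∈ s, monomial l (a l)) = ∑ l ∈ s, monomial l (deriv^[i] (a l)) := by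
  induction i with
  | zero => rfl
  | succ i ih =>
    simp only [Function.iterate_succ_apply', ih, map_sum, mapCoeffs_monomial]

end Differential

/-- For a derivation δ on a field of characteristic p > 0 and 1 ≤ i ≤ p-2,
the sum ∑_{l=0}^{p-2} δ^i(t^{p-1-l})·t^l vanishes. -/
theorem stmt_2 {F : Type*} [Field F] (p : ℕ) [Fact p.Prime] [CharP F p]
    (δ : F → F)
    (hadd : ∀ a b : F, δ (a + b) = δ a + δ b)
    (hmul : ∀ a b : F, δ (a * b) = δ a * b + a * δ b) :
    ∀ t : F, ∀ i : ℕ, 1 ≤ i → i ≤ p - 2 →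
      ∑ l ∈ Finset.range (p - 1), δ^[i] (t ^ (p - 1 - l)) * t ^ l = 0 := by
  intro t i hi1 hi2
  obtain ⟨q, rfl⟩ := Nat.exists_eq_add_of_le' (Fact.out : p.Prime).one_lt.le
  rw [Nat.add_sub_cancel]
  let : Differential F := ⟨.mk' (AddMonoidHom.mk' δ hadd).toIntLinearMap fun a b => by
    simp [hmul, mul_comm, add_comm]⟩
  have hgeom : ∑ l ∈ range (q + 1), monomial l (t ^ (q - l)) = (X - C t) ^ q := by
    simpa only [← C_mul_X_pow_eq_monomial, C_pow, mul_comm, Nat.add_sub_cancel]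
      using CharP.geom_sum₂_eq_sub_pow_pred (q + 1) (X : F[X]) (C t)
  have hvanish : eval t (Differential.mapCoeffs^[i] ((X - C t) ^ q)) = 0 := by
    obtain ⟨h, hh⟩ := Differential.mapCoeffs.pow_dvd_iterate_pow_mul (X - C t) (q - i) i 1
    rw [Nat.sub_add_cancel (by omega), mul_one] at hh
    simp [hh, show q - i ≠ 0 by omega]
  rw [← hgeom, Differential.iterate_mapCoeffs_sum_monomial, eval_finsetSum,
    sum_range_succ] at hvanish
  have hone : (Differential.deriv : Derivation ℤ F F)^[i] 1 = 0 := by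
    obtain ⟨j, rfl⟩ := Nat.exists_eq_add_of_le' hi1
    rw [Function.iterate_succ_apply, Derivation.map_one_eq_zero,
      Function.iterate_fixed (map_zero _)]
  simp only [eval_monomial, Nat.sub_self, pow_zero, hone, zero_mul, add_zero] at hvanish
  exact hvanish
end

section
/- Let D be a central division algebra over a field F with a valuation w extending a valuation v on F, such that D̄ is a field with [D̄ : F̄] = [Γ_D : Γ_F] and D̄/F̄ is a simple field extension generated by an element s̄. If s ∈ D is any lift of a primitive element s̄ and z ∈ D is any element whose value generates Γ_D over Γ_F, then [F(s) : F] ≥ [D̄ : F̄] and [F(z) : F] ≥ [Γ_D : Γ_F]; consequently, if [D : F] = [D̄ : F̄] · [Γ_D : Γ_F] and both indices equal p, then F(s) is a maximal subfield of D. -/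
/-!
Rescaling a relation `∑ gᵢ sⁱ = 0` (`i < f`) by its coefficient of largest value makes all
coefficients integral and one of them `1`; reducing it gives a nontrivial relation among the powers
of `s̄`, which are independent since `s̄` has degree `f`. In a relation `∑ gᵢ zⁱ = 0` (`i < e`) the
nonzero terms have pairwise distinct values, lying in distinct cosets of `Γ_F` in the cyclic group
`Γ_D / Γ_F` of order `e`, so the sum cannot vanish. Finally, if `[D : F] = p²`, the centralizer `C`
of `F[s]` contains `F[s]` and `[C : F]` divides `p²`; it is neither `1` nor `p²` (the latter would
put `F[s]` in the centre `F`), so `[C : F] = p ≤ [F[s] : F]` forces `C = F[s]`.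
-/

open Module

theorem Valuation.sum_ne_zero_of_injOn {R Γ₀ ι : Type*} [Ring R]
    [LinearOrderedCommGroupWithZero Γ₀] (v : Valuation R Γ₀) {s : Finset ι} {t : ι → R}
    (hs : s.Nonempty) (ht : ∀ i ∈ s, v (t i) ≠ 0) (hinj : Set.InjOn (fun i ↦ v (t i)) s) :
    ∑ i ∈ s, t i ≠ 0 := by
  classical
  obtain ⟨j, hj, hmax⟩ := s.exists_max_image (fun i ↦ v (t i)) hs
  have hlt : ∀ i ∈ s \ {j}, v (t i) < v (t j) := fun i hi ↦ by
    obtain ⟨his, hij⟩ := Finset.mem_sdiff.mp hi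
    exact (hmax i his).lt_of_ne fun h ↦ hij (Finset.mem_singleton.mpr (hinj his hj h))
  intro h
  apply ht j hj
  rw [← v.map_sum_eq_of_lt hj hlt, h, map_zero]

theorem linearIndependent_pow_of_valuation_pow_ne {F D Γ₀ : Type*} [Field F] [DivisionRing D]
    [Algebra F D] [LinearOrderedCommGroupWithZero Γ₀] (w : Valuation D Γ₀) {z : D} (hz : z ≠ 0)
    {n : ℕ} (hpow : ∀ m, 0 < m → m < n → ∀ a : F, w z ^ m ≠ w (algebraMap F D a)) :
    LinearIndependent F (fun i : Fin n ↦ z ^ (i : ℕ)) := by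
  classical
  have hw : ∀ a : F, a ≠ 0 → w (algebraMap F D a) ≠ 0 := fun a ha ↦
    w.ne_zero_iff.mpr ((map_ne_zero _).mpr ha)
  have hval_ne : ∀ i j : Fin n, i < j → ∀ a b : F, b ≠ 0 →
      w (a • z ^ (i : ℕ)) ≠ w (b • z ^ (j : ℕ)) := by
    intro i j hij a b hb h
    obtain ⟨m, hm⟩ : ∃ m, (j : ℕ) = i + (m + 1) := ⟨j - i - 1, by omega⟩
    have hwz : w z ^ (i : ℕ) ≠ 0 := pow_ne_zero _ (w.ne_zero_iff.mpr hz)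
    rw [Algebra.smul_def, Algebra.smul_def, map_mul, map_mul, map_pow, map_pow, hm,
      pow_add] at h
    have hwa : w (algebraMap F D a) = w (algebraMap F D b) * w z ^ (m + 1) :=
      mul_right_cancel₀ hwz (h.trans (by ac_rfl))
    refine hpow (m + 1) m.succ_pos (by omega) (a / b) ?_
    rw [map_div₀, map_div₀, hwa, mul_div_cancel_left₀ _ (hw b hb)]
  refine Fintype.linearIndependent_iff.mpr fun g hg ↦ ?_
  by_contra! hne
  set s := Finset.univ.filter (fun i ↦ g i ≠ 0)
  refine w.sum_ne_zero_of_injOn (s := s) (t := fun i ↦ g i • z ^ (i : ℕ)) ?_ ?_ ?_ ?_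
  · obtain ⟨i, hi⟩ := hne
    exact ⟨i, by simpa [s] using hi⟩
  · intro i hi
    simp only [s, Finset.mem_filter] at hi
    simp [hi.2, hz]
  · intro i hi j hj h
    simp only [s, Finset.coe_filter, Finset.mem_univ, true_and, Set.mem_ofPred_eq] at hi hj
    rcases lt_trichotomy i j with hij | rfl | hij
    · exact absurd h (hval_ne i j hij _ _ hj)
    · rfl
    · exact absurd h.symm (hval_ne j i hij _ _ hi)
  · rwa [Finset.sum_filter_of_ne (p := fun i ↦ g i ≠ 0)
      fun i _ h hg0 ↦ h (by rw [hg0, zero_smul])]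

theorem Subgroup.relIndex_dvd_of_zpow_mem {G : Type*} [CommGroup G] {H K : Subgroup G}
    {g : G} (hg : g ∈ K) (hK : K ≤ closure (insert g (H : Set G)))
    {m : ℤ} (hm : g ^ m ∈ H) : (H.relIndex K : ℤ) ∣ m := by
  set q : K ⧸ H.subgroupOf K := QuotientGroup.mk ⟨g, hg⟩
  have hK' : K ≤ zpowers g ⊔ H := by
    rwa [zpowers_eq_closure, ← closure_eq H, ← closure_union, ← Set.insert_eq]
  have hgen : ∀ x, x ∈ zpowers q := by
    refine fun x ↦ QuotientGroup.induction_on x fun x ↦ ?_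
    obtain ⟨y, ⟨n, rfl⟩, h, hh, hx⟩ := mem_sup.mp (hK' x.2)
    refine ⟨n, ?_⟩
    change q ^ n = _
    rw [← QuotientGroup.mk_zpow]
    refine (QuotientGroup.eq.mpr ?_).symm
    rw [mem_subgroupOf]
    simpa [← hx, mul_comm] using hh
  rw [relIndex, index, ← orderOf_eq_card_of_forall_mem_zpowers hgen,
    orderOf_dvd_iff_zpow_eq_one, ← QuotientGroup.mk_zpow, QuotientGroup.eq_one_iff,
    mem_subgroupOf]
  simpa using hm

theorem linearIndependent_of_linearIndependent_residue {F D k R Γ₀ ι : Type*} [Field F]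
    [Ring D] [Algebra F D] [Field k] [Ring R] [Algebra k R] [LinearOrderedCommGroupWithZero Γ₀]
    [Fintype ι] (w : Valuation D Γ₀) (π : w.integer →+* R)
    (πF : (w.comap (algebraMap F D)).integer →+* k)
    (hcompat : ∀ (a : F) (ha : a ∈ (w.comap (algebraMap F D)).integer),
      algebraMap k R (πF ⟨a, ha⟩) = π ⟨algebraMap F D a, ha⟩)
    {x : ι → w.integer} (hlin : LinearIndependent k (fun i ↦ π (x i))) :
    LinearIndependent F (fun i ↦ (x i : D)) := by
  let v := w.comap (algebraMap F D)
  refine Fintype.linearIndependent_iff.mpr fun g hg ↦ ?_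
  by_contra! ⟨i₀, hi₀⟩
  obtain ⟨j, -, hmax⟩ := Finset.univ.exists_max_image (fun i ↦ v (g i)) ⟨i₀, Finset.mem_univ _⟩
  have hgj : g j ≠ 0 := fun h ↦ hi₀ <| v.zero_iff.mp <|
    le_zero_iff.mp ((hmax i₀ (Finset.mem_univ _)).trans_eq (by rw [h, map_zero]))
  let c i := (g j)⁻¹ * g i
  have hc : ∀ i, c i ∈ v.integer := fun i ↦ by
    change v ((g j)⁻¹ * g i) ≤ 1
    rw [map_mul, map_inv₀]
    exact inv_mul_le_one_of_le₀ (hmax i (Finset.mem_univ _)) zero_le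
  have hsum : ∑ i, c i • (x i : D) = 0 := by
    simp_rw [c, mul_smul, ← Finset.smul_sum, hg, smul_zero]
  have hres : ∑ i, πF ⟨c i, hc i⟩ • π (x i) = 0 := by
    have : ∑ i, (⟨algebraMap F D (c i), hc i⟩ * x i : w.integer) = 0 :=
      Subtype.ext (by simpa [Algebra.smul_def] using hsum)
    rw [← map_zero π, ← this, map_sum]
    refine Finset.sum_congr rfl fun i _ ↦ ?_
    rw [Algebra.smul_def, hcompat]
    exact (map_mul π _ _).symm
  have hcj : (⟨c j, hc j⟩ : v.integer) = 1 := Subtype.ext (inv_mul_cancel₀ hgj)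
  simpa [hcj] using Fintype.linearIndependent_iff.mp hlin _ hres j

theorem linearIndependent_pow_of_adjoin_simple_eq_top {K L : Type*} [Field K] [Field L]
    [Algebra K L] {x : L} (hx : IntermediateField.adjoin K {x} = ⊤) :
    LinearIndependent K (fun i : Fin (finrank K L) ↦ x ^ (i : ℕ)) := by
  by_cases hint : IsIntegral K x
  · have := linearIndependent_pow (K := K) x
    rwa [← IntermediateField.adjoin.finrank hint, hx, IntermediateField.finrank_top'] at this
  · have : IsEmpty (Fin (finrank K L)) := by
      rw [finrank_of_not_finite fun _ ↦ hint (.of_finite K x)]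
      infer_instance
    exact linearIndependent_empty_type

theorem le_finrank_adjoin_of_linearIndependent_pow {F D : Type*} [Field F] [Ring D]
    [Algebra F D] [FiniteDimensional F D] {n : ℕ} {x : D}
    (h : LinearIndependent F (fun i : Fin n ↦ x ^ (i : ℕ))) :
    n ≤ finrank F (Algebra.adjoin F {x}) := by
  have hspan : Submodule.span F (Set.range fun i : Fin n ↦ x ^ (i : ℕ)) ≤
      Subalgebra.toSubmodule (Algebra.adjoin F {x}) :=
    Submodule.span_le.mpr <| Set.range_subset_iff.mpr fun i ↦
      pow_mem (Algebra.self_mem_adjoin_singleton F x) _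
  simpa [finrank_span_eq_card h, Subalgebra.finrank_toSubmodule] using
    Submodule.finrank_mono hspan

theorem Subalgebra.finrank_dvd_finrank {F D : Type*} [Field F] [Ring D] [IsDomain D]
    [Algebra F D] [FiniteDimensional F D] (C : Subalgebra F D) : finrank F C ∣ finrank F D :=
  letI := divisionRingOfFiniteDimensional F C
  finrank_dvd_finrank_right F C D

theorem Subalgebra.centralizer_eq_self_of_finrank_eq_sq {F D : Type*} [Field F]
    [DivisionRing D] [Algebra F D] [FiniteDimensional F D] [Algebra.IsCentral F D] {p : ℕ}
    (hp : p.Prime) (hD : finrank F D = p ^ 2) {A : Subalgebra F D} [IsMulCommutative A]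
    (hA : p ≤ finrank F A) : centralizer F (A : Set D) = A := by
  set C := centralizer F (A : Set D)
  have hAC : A ≤ C := fun x hx ↦ (mem_centralizer_iff F).mpr fun y hy ↦ setLike_mul_comm hy hx
  have hA_ne_bot : A ≠ ⊥ := by
    rintro rfl
    rw [finrank_bot] at hA
    exact hp.one_lt.not_ge hA
  obtain ⟨k, hk, hC⟩ := (Nat.dvd_prime_pow hp).mp (hD ▸ C.finrank_dvd_finrank)
  interval_cases k
  · exact absurd (le_bot_iff.mp (hAC.trans (eq_bot_of_finrank_one (by simpa using hC)).le))
      hA_ne_bot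
  · exact (eq_of_le_of_finrank_le hAC (by simpa [hC] using hA)).symm
  · have hCtop : C = ⊤ := Algebra.toSubmodule_eq_top.mp <|
      Submodule.eq_top_of_finrank_eq (C.finrank_toSubmodule.trans (hC.trans hD.symm))
    have hA_center : (A : Set D) ⊆ center F D := (centralizer_eq_top_iff_subset F).mp hCtop
    rw [Algebra.IsCentral.center_eq_bot] at hA_center
    exact absurd (le_bot_iff.mp hA_center) hA_ne_bot

theorem stmt_8_general {F D : Type*} [Field F] [DivisionRing D] [Algebra F D]
    [FiniteDimensional F D]
    (hcentral : ∀ x : D, (∀ y : D, x * y = y * x) ↔ x ∈ (algebraMap F D).range)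
    (w : Valuation D (WithZero (Multiplicative ℤ)))
    (ΓD ΓF : Subgroup (Multiplicative ℤ))
    (hΓD : ∀ γ : Multiplicative ℤ,
      γ ∈ ΓD ↔ ∃ x : D, x ≠ 0 ∧ w x = (γ : WithZero (Multiplicative ℤ)))
    (hΓF : ∀ γ : Multiplicative ℤ,
      γ ∈ ΓF ↔ ∃ a : F, a ≠ 0 ∧ w (algebraMap F D a) = (γ : WithZero (Multiplicative ℤ)))
    (Dbar : Type*) [Field Dbar]
    (π : w.integer →+* Dbar)
    (kbar : Type*) [Field kbar]
    (πF : (w.comap (algebraMap F D)).integer →+* kbar)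
    (ι : kbar →+* Dbar)
    (hcompat : ∀ (a : F) (ha : a ∈ (w.comap (algebraMap F D)).integer)
      (hb : algebraMap F D a ∈ w.integer),
      ι (πF ⟨a, ha⟩) = π ⟨algebraMap F D a, hb⟩)
    (e f : ℕ) (he : e = ΓF.relIndex ΓD)
    (hf : f = @Module.finrank kbar Dbar _ _ ι.toModule)
    (sbar : Dbar) (hsbar : Subfield.closure (Set.range ι ∪ {sbar}) = ⊤)
    (s : D) (hs : s ∈ w.integer) (hslift : π ⟨s, hs⟩ = sbar)
    (z : D) (hz : z ≠ 0) (γz : Multiplicative ℤ)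
    (hwz : w z = (γz : WithZero (Multiplicative ℤ)))
    (hgen : ΓD ≤ Subgroup.closure (insert γz (ΓF : Set (Multiplicative ℤ)))) :
    f ≤ Module.finrank F (Algebra.adjoin F {s}) ∧
    e ≤ Module.finrank F (Algebra.adjoin F {z}) ∧
    (∀ p : ℕ, p.Prime → Module.finrank F D = f * e → f = p → e = p →
      Subalgebra.centralizer F ((Algebra.adjoin F {s} : Subalgebra F D) : Set D)
        = Algebra.adjoin F {s}) := by
  let : Algebra kbar Dbar := ι.toAlgebra
  have hf_le : f ≤ finrank F (Algebra.adjoin F {s}) := by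
    have hsbar' : IntermediateField.adjoin kbar {sbar} = ⊤ :=
      IntermediateField.toSubfield_injective <| by
        rw [IntermediateField.adjoin_toSubfield]
        exact hsbar
    have hres := linearIndependent_pow_of_adjoin_simple_eq_top hsbar'
    rw [← hslift, ← hf] at hres
    have hlift : LinearIndependent F (fun i : Fin f ↦ s ^ (i : ℕ)) := by
      simpa using linearIndependent_of_linearIndependent_residue w π πF
        (fun a ha ↦ hcompat a ha ha) (x := fun i : Fin f ↦ ⟨s, hs⟩ ^ (i : ℕ))
        (by simpa only [map_pow] using hres)
    exact le_finrank_adjoin_of_linearIndependent_pow hlift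
  have he_le : e ≤ finrank F (Algebra.adjoin F {z}) := by
    refine le_finrank_adjoin_of_linearIndependent_pow <|
      linearIndependent_pow_of_valuation_pow_ne w hz fun m hm hme a ha ↦ ?_
    have ha0 : a ≠ 0 := by
      rintro rfl
      simp [hz] at ha
    have hmem : γz ^ (m : ℤ) ∈ ΓF := (hΓF _).mpr ⟨a, ha0, by simp [← ha, hwz]⟩
    have hdvd := Subgroup.relIndex_dvd_of_zpow_mem ((hΓD γz).mpr ⟨z, hz, hwz⟩) hgen hmem
    rw [← he, Int.natCast_dvd_natCast] at hdvd
    exact absurd (Nat.le_of_dvd hm hdvd) (by omega)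
  refine ⟨hf_le, he_le, fun p hp hD hfp hep ↦ ?_⟩
  have : Algebra.IsCentral F D := ⟨fun x hx ↦ (hcentral x).mp fun y ↦
    (Subalgebra.mem_center_iff.mp hx y).symm⟩
  exact Subalgebra.centralizer_eq_self_of_finrank_eq_sq hp (by rw [hD, hfp, hep, sq])
    (hfp ▸ hf_le)

/-- Degree bounds for subfields generated by a lift of a primitive residue
element and by a parameter, and maximality of F(s) when [D:F] = p². -/
theorem stmt_8 {F D : Type*} [Field F] [DivisionRing D] [Algebra F D]
    [FiniteDimensional F D]
    (hcentral : ∀ x : D, (∀ y : D, x * y = y * x) ↔ x ∈ (algebraMap F D).range)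
    (w : Valuation D (WithZero (Multiplicative ℤ)))
    (ΓD ΓF : Subgroup (Multiplicative ℤ))
    (hΓD : ∀ γ : Multiplicative ℤ,
      γ ∈ ΓD ↔ ∃ x : D, x ≠ 0 ∧ w x = (γ : WithZero (Multiplicative ℤ)))
    (hΓF : ∀ γ : Multiplicative ℤ,
      γ ∈ ΓF ↔ ∃ a : F, a ≠ 0 ∧ w (algebraMap F D a) = (γ : WithZero (Multiplicative ℤ)))
    (Dbar : Type*) [Field Dbar]
    (π : w.integer →+* Dbar) (hπ : Function.Surjective π)
    (hπker : ∀ x : w.integer, π x = 0 ↔ w (x : D) < 1)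
    (kbar : Type*) [Field kbar]
    (πF : (w.comap (algebraMap F D)).integer →+* kbar)
    (hπF : Function.Surjective πF)
    (hπFker : ∀ a : (w.comap (algebraMap F D)).integer,
      πF a = 0 ↔ w (algebraMap F D (a : F)) < 1)
    (ι : kbar →+* Dbar)
    (hcompat : ∀ (a : F) (ha : a ∈ (w.comap (algebraMap F D)).integer)
      (hb : algebraMap F D a ∈ w.integer),
      ι (πF ⟨a, ha⟩) = π ⟨algebraMap F D a, hb⟩)
    (e f : ℕ) (he : e = ΓF.relIndex ΓD)
    (hf : f = @Module.finrank kbar Dbar _ _ ι.toModule)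
    (hfe : f = e)
    (sbar : Dbar) (hsbar : Subfield.closure (Set.range ι ∪ {sbar}) = ⊤)
    (s : D) (hs : s ∈ w.integer) (hslift : π ⟨s, hs⟩ = sbar)
    (z : D) (hz : z ≠ 0) (γz : Multiplicative ℤ)
    (hwz : w z = (γz : WithZero (Multiplicative ℤ)))
    (hgen : ΓD ≤ Subgroup.closure (insert γz (ΓF : Set (Multiplicative ℤ)))) :
    f ≤ Module.finrank F (Algebra.adjoin F {s}) ∧
    e ≤ Module.finrank F (Algebra.adjoin F {z}) ∧
    (∀ p : ℕ, p.Prime → Module.finrank F D = f * e → f = p → e = p →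
      Subalgebra.centralizer F ((Algebra.adjoin F {s} : Subalgebra F D) : Set D)
        = Algebra.adjoin F {s}) :=
  stmt_8_general hcentral w ΓD ΓF hΓD hΓF Dbar π kbar πF ι hcompat e f he hf sbar hsbar s hs hslift
    z hz γz hwz hgen
end

section
/- Let D be a division ring with valuation w whose value group is ℤ, let z ∈ D with w(z) = 1, and suppose a ∈ D with w(a) = 0 satisfies w(z a z^{−1} − a) = j < ∞. Then for every unit c ∈ D with w(c) = 0 and w(c a − a c) > j, the element z' = c z also satisfies w(z' a z'^{−1} − a) = j. -/
/-- The order j of non-commutation of a with a parameter z is unchanged when z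
is multiplied by a unit c commuting with a up to order > j. -/
theorem stmt_14 {D : Type*} [DivisionRing D] (w : D → ℤ)
    (hmul : ∀ x y : D, x ≠ 0 → y ≠ 0 → w (x * y) = w x + w y)
    (hadd : ∀ x y : D, x ≠ 0 → y ≠ 0 → x + y ≠ 0 → min (w x) (w y) ≤ w (x + y))
    (z : D) (hz : z ≠ 0) (hwz : w z = 1)
    (a : D) (ha : a ≠ 0) (hwa : w a = 0)
    (j : ℤ) (hne : z * a * z⁻¹ - a ≠ 0) (hj : w (z * a * z⁻¹ - a) = j)
    (c : D) (hc : c ≠ 0) (hwc : w c = 0)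
    (hcac : c * a = a * c ∨ (c * a - a * c ≠ 0 ∧ j < w (c * a - a * c))) :
    (c * z) * a * (c * z)⁻¹ - a ≠ 0 ∧ w ((c * z) * a * (c * z)⁻¹ - a) = j := by
  have h1 : w 1 = 0 := by
    have := hmul 1 1 one_ne_zero one_ne_zero
    simp at this; linarith
  have hinv : ∀ x : D, x ≠ 0 → w x⁻¹ = -w x := by
    intro x hx
    have h := hmul x x⁻¹ hx (inv_ne_zero hx)
    rw [mul_inv_cancel₀ hx, h1] at h
    linarith
  have hneg : ∀ x : D, x ≠ 0 → w (-x) = w x := by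
    intro x hx
    have hm1 : w (-1 : D) = 0 := by
      have := hmul (-1) (-1) (by norm_num) (by norm_num)
      simp at this; linarith
    have h := hmul (-1) x (by norm_num) hx
    rw [neg_one_mul] at h
    rw [h, hm1, zero_add]
  set u := c * (z * a * z⁻¹ - a) * c⁻¹ with hu
  have hu0 : u ≠ 0 := mul_ne_zero (mul_ne_zero hc hne) (inv_ne_zero hc)
  have hwu : w u = j := by
    rw [hu, hmul _ _ (mul_ne_zero hc hne) (inv_ne_zero hc), hmul _ _ hc hne,
      hwc, hj, hinv c hc, hwc]
    ring
  have key : (c * z) * a * (c * z)⁻¹ - a = u + (c * a * c⁻¹ - a) := by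
    rw [hu, mul_inv_rev]
    noncomm_ring
  rcases hcac with h | ⟨hv0, hvj⟩
  · have hz0 : c * a * c⁻¹ - a = 0 := by
      rw [h, mul_assoc, mul_inv_cancel₀ hc, mul_one, sub_self]
    rw [key, hz0, add_zero]
    exact ⟨hu0, hwu⟩
  · set v := c * a * c⁻¹ - a with hv
    have hveq : v = (c * a - a * c) * c⁻¹ := by
      rw [hv, sub_mul, mul_assoc, mul_assoc, mul_inv_cancel₀ hc, mul_one]
    have hv0' : v ≠ 0 := by
      rw [hveq]; exact mul_ne_zero hv0 (inv_ne_zero hc)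
    have hwv : j < w v := by
      rw [hveq, hmul _ _ hv0 (inv_ne_zero hc), hinv c hc, hwc]
      linarith
    have hsum0 : u + v ≠ 0 := by
      intro h0
      have heq : u = -v := eq_neg_of_add_eq_zero_left h0
      rw [heq, hneg v hv0'] at hwu
      omega
    have hle : j ≤ w (u + v) := by
      have h := hadd u v hu0 hv0' hsum0
      rw [hwu] at h
      omega
    have hge : w (u + v) ≤ j := by
      have h := hadd (u + v) (-v) hsum0 (neg_ne_zero.mpr hv0')
        (by rw [add_neg_cancel_right]; exact hu0)
      rw [add_neg_cancel_right, hwu, hneg v hv0'] at h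
      omega
    rw [key]
    exact ⟨hsum0, le_antisymm hge hle⟩
end

section
/- Let p be a prime, F a field of characteristic p, δ : F → F a derivation, and t ∈ F with δ(t) ≠ 0. Suppose D : 𝔽_p(t) → F is an additive map that can be written as D = c₁δ + c₂δ² + … + c_{p−2}δ^{p−2} on 𝔽_p(t) with coefficients c_i ∈ F. Then ∑_{l=0}^{p−2} D(t^{p−1−l}) · t^l = 0. -/
/-!
For a derivation `D`, `D^i (t^n) = ∑_{j ≤ i} c_{i,j} n(n-1)⋯(n-j+1) t^(n-j)` with coefficients
`c_{i,j}` independent of `n`. Reindexing by `n = p - 1 - l` (the extra term `n = 0` is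
`D^i 1 = 0`), the sum becomes `∑_{j ≤ i} c_{i,j} t^(p-1-j) ∑_{n < p} n(n-1)⋯(n-j+1)`, and the inner
sum is `j! · C(p, j+1)`, divisible by `p` as long as `j + 1 < p`, i.e. `i ≤ p - 2`.
-/

open Finset

theorem Nat.sum_range_choose_eq_choose_succ (m j : ℕ) :
    ∑ n ∈ range m, n.choose j = m.choose (j + 1) := by
  induction m with
  | zero => simp
  | succ m ih => rw [sum_range_succ, ih, Nat.choose_succ_succ' m j, add_comm]

theorem Nat.Prime.dvd_sum_range_descFactorial {p j : ℕ} (hp : p.Prime) (hj : j + 1 < p) :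
    p ∣ ∑ n ∈ range p, n.descFactorial j := by
  simp_rw [Nat.descFactorial_eq_factorial_mul_choose, ← mul_sum,
    Nat.sum_range_choose_eq_choose_succ]
  exact dvd_mul_of_dvd_right (hp.dvd_choose_self j.succ_ne_zero hj) _

namespace Derivation

variable {R A : Type*} [CommSemiring R] [CommSemiring A] [Algebra R A]
  (D : Derivation R A A) (t : A)

def iterateCoeff : ℕ → ℕ → A
  | 0, 0 => 1
  | 0, _ + 1 => 0
  | i + 1, 0 => D (iterateCoeff i 0)
  | i + 1, j + 1 => D (iterateCoeff i (j + 1)) + iterateCoeff i j * D t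

theorem iterateCoeff_eq_zero_of_lt {i j : ℕ} (h : i < j) : D.iterateCoeff t i j = 0 := by
  induction i generalizing j with
  | zero => obtain ⟨j, rfl⟩ := Nat.exists_eq_succ_of_ne_zero h.ne'; rfl
  | succ i ih =>
    obtain ⟨j, rfl⟩ := Nat.exists_eq_succ_of_ne_zero (by omega : j ≠ 0)
    simp [iterateCoeff, ih (by omega : i < j + 1), ih (by omega : i < j)]

theorem apply_descFactorial_mul_pow (n j : ℕ) :
    D (n.descFactorial j * t ^ (n - j)) = n.descFactorial (j + 1) * t ^ (n - (j + 1)) * D t := by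
  rw [D.leibniz, D.map_natCast, smul_zero, add_zero, D.leibniz_pow, Nat.descFactorial_succ,
    Nat.sub_sub, smul_eq_mul, nsmul_eq_mul, smul_eq_mul]
  push_cast
  ring

theorem iterate_apply_pow (i n : ℕ) :
    D^[i] (t ^ n) =
      ∑ j ∈ range (i + 1), D.iterateCoeff t i j * n.descFactorial j * t ^ (n - j) := by
  induction i with
  | zero => simp [iterateCoeff]
  | succ i ih =>
    have hD : ∀ j, D (D.iterateCoeff t i j * n.descFactorial j * t ^ (n - j)) =
        D (D.iterateCoeff t i j) * n.descFactorial j * t ^ (n - j) +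
          D.iterateCoeff t i j * D t * n.descFactorial (j + 1) * t ^ (n - (j + 1)) := by
      intro j
      rw [mul_assoc, D.leibniz, apply_descFactorial_mul_pow, smul_eq_mul, smul_eq_mul]
      ring
    have hshift :
        ∑ j ∈ range (i + 1), D (D.iterateCoeff t i j) * n.descFactorial j * t ^ (n - j) =
        ∑ j ∈ range (i + 1),
            D (D.iterateCoeff t i (j + 1)) * n.descFactorial (j + 1) * t ^ (n - (j + 1)) +
          D (D.iterateCoeff t i 0) * n.descFactorial 0 * t ^ (n - 0) := by
      rw [← sum_range_succ' (fun j => D (D.iterateCoeff t i j) * n.descFactorial j * t ^ (n - j)),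
        sum_range_succ _ (i + 1), D.iterateCoeff_eq_zero_of_lt t (Nat.lt_succ_self i), map_zero,
        zero_mul, zero_mul, add_zero]
    rw [Function.iterate_succ_apply', ih, map_sum, sum_congr rfl fun j _ => hD j,
      sum_add_distrib, sum_range_succ' _ (i + 1), hshift]
    simp only [iterateCoeff, add_mul, sum_add_distrib]
    ring

theorem sum_range_iterate_apply_pow_mul_pow_eq_zero {p : ℕ} [CharP A p] (hp : p.Prime) {i : ℕ}
    (hi : i + 1 < p) : ∑ n ∈ range p, D^[i] (t ^ n) * t ^ (p - 1 - n) = 0 := by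
  have hterm : ∀ n ∈ range p, ∀ j (a : A), a * n.descFactorial j * t ^ (n - j) * t ^ (p - 1 - n) =
      a * t ^ (p - 1 - j) * n.descFactorial j := by
    intro n hn j a
    rw [mem_range] at hn
    rcases le_or_gt j n with hjn | hnj
    · rw [mul_assoc, ← pow_add, show n - j + (p - 1 - n) = p - 1 - j by omega]
      ring
    · simp [Nat.descFactorial_eq_zero_iff_lt.mpr hnj]
  calc ∑ n ∈ range p, D^[i] (t ^ n) * t ^ (p - 1 - n)
      = ∑ n ∈ range p, ∑ j ∈ range (i + 1),
          D.iterateCoeff t i j * t ^ (p - 1 - j) * n.descFactorial j := by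
        refine sum_congr rfl fun n hn => ?_
        rw [iterate_apply_pow, sum_mul]
        exact sum_congr rfl fun j _ => hterm n hn j _
    _ = ∑ j ∈ range (i + 1), D.iterateCoeff t i j * t ^ (p - 1 - j) *
          ((∑ n ∈ range p, n.descFactorial j : ℕ) : A) := by
        rw [sum_comm]
        simp_rw [Nat.cast_sum, mul_sum]
    _ = 0 := sum_eq_zero fun j hj => by
        rw [(CharP.cast_eq_zero_iff A p _).mpr
          (hp.dvd_sum_range_descFactorial (by rw [mem_range] at hj; omega)), mul_zero]

theorem sum_range_iterate_apply_pow_sub_mul_pow_eq_zero {p : ℕ} [CharP A p] (hp : p.Prime) {i : ℕ}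
    (hi₀ : 1 ≤ i) (hi : i + 1 < p) :
    ∑ l ∈ range (p - 1), D^[i] (t ^ (p - 1 - l)) * t ^ l = 0 := by
  have hone : D^[i] (t ^ 0) = 0 := by
    obtain ⟨k, rfl⟩ := Nat.exists_eq_add_of_le' hi₀
    rw [pow_zero, Function.iterate_succ_apply, D.map_one_eq_zero,
      Function.iterate_fixed (map_zero D)]
  have h := D.sum_range_iterate_apply_pow_mul_pow_eq_zero t hp hi
  rw [← Nat.sub_add_cancel hp.one_le, sum_range_succ', hone, zero_mul, add_zero,
    ← sum_range_reflect] at h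
  rw [← h]
  refine sum_congr rfl fun l hl => ?_
  rw [mem_range] at hl
  congr 3 <;> omega

end Derivation

theorem stmt_16_general {F : Type*} [Field F] (p : ℕ) [Fact p.Prime] [CharP F p]
    (δ : F → F)
    (hadd : ∀ a b : F, δ (a + b) = δ a + δ b)
    (hmul : ∀ a b : F, δ (a * b) = δ a * b + a * δ b)
    (t : F)
    (Dm : F → F)
    (c : ℕ → F)
    (hD : ∀ x ∈ Subfield.closure {t},
        Dm x = ∑ i ∈ Finset.Icc 1 (p - 2), c i * δ^[i] x) :
    ∑ l ∈ Finset.range (p - 1), Dm (t ^ (p - 1 - l)) * t ^ l = 0 := by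
  let d : Derivation ℤ F F := Derivation.mk' (AddMonoidHom.mk' δ hadd).toIntLinearMap
    fun a b => by
      simp only [AddMonoidHom.coe_toIntLinearMap, AddMonoidHom.mk'_apply, hmul, smul_eq_mul]
      ring
  have hpow : ∀ k : ℕ, t ^ k ∈ Subfield.closure {t} := fun k =>
    pow_mem (Subfield.subset_closure (Set.mem_singleton t)) k
  calc ∑ l ∈ range (p - 1), Dm (t ^ (p - 1 - l)) * t ^ l
      = ∑ l ∈ range (p - 1), ∑ i ∈ Icc 1 (p - 2), c i * (δ^[i] (t ^ (p - 1 - l)) * t ^ l) := by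
        simp_rw [hD _ (hpow _), sum_mul, mul_assoc]
    _ = ∑ i ∈ Icc 1 (p - 2), c i * ∑ l ∈ range (p - 1), δ^[i] (t ^ (p - 1 - l)) * t ^ l := by
        rw [sum_comm]
        simp_rw [mul_sum]
    _ = 0 := sum_eq_zero fun i hi => by
        rw [mem_Icc] at hi
        exact mul_eq_zero_of_right _
          (d.sum_range_iterate_apply_pow_sub_mul_pow_eq_zero t Fact.out hi.1 (by omega))

/-- If D is an F-linear combination of δ, δ², …, δ^{p-2} on 𝔽_p(t), then
∑_{l=0}^{p-2} D(t^{p-1-l})·t^l = 0. -/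
theorem stmt_16 {F : Type*} [Field F] (p : ℕ) [Fact p.Prime] [CharP F p]
    (δ : F → F)
    (hadd : ∀ a b : F, δ (a + b) = δ a + δ b)
    (hmul : ∀ a b : F, δ (a * b) = δ a * b + a * δ b)
    (t : F) (ht : δ t ≠ 0)
    (Dm : F → F) (hDadd : ∀ a b : F, Dm (a + b) = Dm a + Dm b)
    (c : ℕ → F)
    (hD : ∀ x ∈ Subfield.closure {t},
        Dm x = ∑ i ∈ Finset.Icc 1 (p - 2), c i * δ^[i] x) :
    ∑ l ∈ Finset.range (p - 1), Dm (t ^ (p - 1 - l)) * t ^ l = 0 :=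
  stmt_16_general p δ hadd hmul t Dm c hD
end
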